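/- Let γ : I → ℝ^n be a C¹ generalized orbit of a convex foliation {C_r}_{r≥0} with nowhere-vanishing derivative (no stationary point). Then γ is strongly self-contracted: sec⁻(τ) ⊆ int N_{Ω(τ)}(γ(τ)) for all τ ∈ I, where Ω(τ) is the convex hull of {γ(t) : t ∈ I, t ≥ τ}. -/

import Mathlib

open Set Metric Filter Topology RealInnerProductSpace

/-- The normal cone of a convex set `K` at a point `u₀`. -/
def normalCone {n : ℕ} (K : Set (EuclideanSpace ℝ (Fin n))) (u₀ : EuclideanSpace ℝ (Fin n)) :
    Set (EuclideanSpace ℝ (Fin n)) :=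
  {v | ∀ u ∈ K, ⟪v, u - u₀⟫ ≤ 0}

/-- The set `sec⁻(τ)` of limits of backward unit secant vectors of the curve `γ` at `τ`. -/
def secMinus {n : ℕ} (I : Set ℝ) (γ : ℝ → EuclideanSpace ℝ (Fin n)) (τ : ℝ) :
    Set (EuclideanSpace ℝ (Fin n)) :=
  {q | ‖q‖ = 1 ∧ ∃ t : ℕ → ℝ, (∀ k, t k ∈ I) ∧ (∀ k, t k < τ) ∧
    Tendsto t atTop (nhds τ) ∧
    Tendsto (fun k => ‖γ (t k) - γ τ‖⁻¹ • (γ (t k) - γ τ)) atTop (nhds q)}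

/-- A curve `γ : I → ℝⁿ` is *strongly self-contracted* if it is continuous, injective, and
for every `τ ∈ I`, `sec⁻(τ)` is contained in the interior of the normal cone at `γ τ` of
the convex hull `Ω(τ)` of the tail `{γ t : t ∈ I, t ≥ τ}`. -/
def StronglySelfContracted {n : ℕ} (I : Set ℝ) (γ : ℝ → EuclideanSpace ℝ (Fin n)) : Prop :=
  ContinuousOn γ I ∧ InjOn γ I ∧
  ∀ τ ∈ I, secMinus I γ τ ⊆
    interior (normalCone (convexHull ℝ (γ '' (I ∩ Ici τ))) (γ τ))

/-- A family `{C r}_{r ≥ 0}` of nonempty compact convex sets is a *convex foliation* of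
`ℝⁿ` if it is strictly nested (`r₁ < r₂ → C r₁ ⊆ int C r₂`) and the boundaries
`∂(C r)`, `r ≥ 0`, cover `ℝⁿ \ int (C 0)`. -/
def IsConvexFoliation {n : ℕ} (C : ℝ → Set (EuclideanSpace ℝ (Fin n))) : Prop :=
  (∀ r, 0 ≤ r → (C r).Nonempty ∧ IsCompact (C r) ∧ Convex ℝ (C r)) ∧
  (∀ r₁ r₂, 0 ≤ r₁ → r₁ < r₂ → C r₁ ⊆ interior (C r₂)) ∧
  (⋃ r ∈ Ici (0 : ℝ), frontier (C r)) = univ \ interior (C 0)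

/-- A continuous curve `γ : I → ℝⁿ` is a *generalized orbit* of the convex foliation
`{C r}` if its image avoids `int (C 0)`, the level function `r(·)` (determined by
`γ(t) ∈ ∂ C (r t)`) is strictly decreasing, and `sec⁻(t) ⊆ N_{C (r t)}(γ t)` for all
`t ∈ I`. -/
def IsGeneralizedOrbit {n : ℕ} (C : ℝ → Set (EuclideanSpace ℝ (Fin n)))
    (I : Set ℝ) (γ : ℝ → EuclideanSpace ℝ (Fin n)) (r : ℝ → ℝ) : Prop :=
  ContinuousOn γ I ∧
  (∀ t ∈ I, γ t ∉ interior (C 0)) ∧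
  (∀ t ∈ I, 0 ≤ r t ∧ γ t ∈ frontier (C (r t))) ∧
  (∀ t₁ ∈ I, ∀ t₂ ∈ I, t₁ < t₂ → r t₂ < r t₁) ∧
  (∀ t ∈ I, secMinus I γ t ⊆ normalCone (C (r t)) (γ t))

/-
A backward secant direction `q` at `τ` must be `-γ'(τ)/‖γ'(τ)‖`, and by the orbit condition it is
normal to the level set `C (r τ)` at `γ τ`. It lies in the interior of the normal cone of the tail
hull as soon as `⟪q, γ s - γ τ⟫ ≤ -ε ‖γ s - γ τ‖` uniformly over the tail `s ≥ τ`. Near `τ` this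
holds with `ε = 1/2` since the forward secants point along `γ'(τ)`. From some `s₁ > τ` on, the
tail stays in the compact level `C (r s₁) ⊆ int C (r τ)`, against which the nonzero normal `q` is
strictly negative; compactness makes the ratio uniform.
-/

section NormalCone

variable {n : ℕ} {K L : Set (EuclideanSpace ℝ (Fin n))} {u₀ q : EuclideanSpace ℝ (Fin n)}

lemma normalCone_convexHull : normalCone (convexHull ℝ K) u₀ = normalCone K u₀ := by
  refine Subset.antisymm (fun v hv u hu => hv u (subset_convexHull ℝ K hu)) fun v hv u hu => ?_
  have hhalf : Convex ℝ {u | ⟪v, u⟫ ≤ ⟪v, u₀⟫} :=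
    convex_halfSpace_le (innerₛₗ ℝ v).isLinear _
  have hK : K ⊆ {u | ⟪v, u⟫ ≤ ⟪v, u₀⟫} := fun w hw => by
    simpa [inner_sub_right] using hv w hw
  simpa [inner_sub_right] using convexHull_min hK hhalf hu

lemma mem_interior_normalCone_of_forall_inner_le {ε : ℝ} (hε : 0 < ε)
    (h : ∀ u ∈ K, ⟪q, u - u₀⟫ ≤ -ε * ‖u - u₀‖) : q ∈ interior (normalCone K u₀) := by
  refine mem_interior.2 ⟨ball q ε, fun v hv u hu => ?_, isOpen_ball, mem_ball_self hε⟩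
  have hvq : ‖v - q‖ ≤ ε := (mem_ball_iff_norm.1 hv).le
  calc ⟪v, u - u₀⟫ = ⟪q, u - u₀⟫ + ⟪v - q, u - u₀⟫ := by rw [inner_sub_left]; ring
    _ ≤ -ε * ‖u - u₀‖ + ‖v - q‖ * ‖u - u₀‖ := add_le_add (h u hu) (real_inner_le_norm _ _)
    _ ≤ 0 := by nlinarith [norm_nonneg (u - u₀)]

lemma inner_neg_of_mem_normalCone_of_mem_interior (hq : q ∈ normalCone L u₀) (hq0 : q ≠ 0)
    {u : EuclideanSpace ℝ (Fin n)} (hu : u ∈ interior L) : ⟪q, u - u₀⟫ < 0 := by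
  obtain ⟨η, hη, hball⟩ := Metric.isOpen_iff.1 isOpen_interior u hu
  have hq_pos : 0 < ‖q‖ := norm_pos_iff.2 hq0
  obtain ⟨t, ht, htq⟩ : ∃ t > 0, t * ‖q‖ < η :=
    ⟨η / (2 * ‖q‖), by positivity, by field_simp; linarith⟩
  have hmem : u + t • q ∈ L := by
    refine interior_subset (hball ?_)
    rwa [mem_ball_iff_norm, add_sub_cancel_left, norm_smul, Real.norm_of_nonneg ht.le]
  have := hq _ hmem
  rw [add_sub_right_comm, inner_add_right, real_inner_smul_right,
    real_inner_self_eq_norm_mul_norm] at this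
  nlinarith [mul_pos ht (mul_pos hq_pos hq_pos)]

lemma exists_pos_forall_inner_le_of_subset_interior (hK : IsCompact K) (hKL : K ⊆ interior L)
    (hq : q ∈ normalCone L u₀) (hq0 : q ≠ 0) :
    ∃ ε > 0, ∀ u ∈ K, ⟪q, u - u₀⟫ ≤ -ε * ‖u - u₀‖ := by
  have hneg : ∀ u ∈ K, ⟪q, u - u₀⟫ < 0 := fun u hu =>
    inner_neg_of_mem_normalCone_of_mem_interior hq hq0 (hKL hu)
  have hne : ∀ u ∈ K, ‖u - u₀‖ ≠ 0 := fun u hu h0 => by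
    simpa [norm_eq_zero.1 h0] using hneg u hu
  have hcont : ContinuousOn (fun u => -⟪q, u - u₀⟫ / ‖u - u₀‖) K :=
    ContinuousOn.div (by fun_prop) (by fun_prop) hne
  obtain ⟨ε, hε, hεK⟩ := hK.exists_forall_le' hcont fun u hu =>
    div_pos (neg_pos.2 (hneg u hu)) ((norm_nonneg _).lt_of_ne' (hne u hu))
  refine ⟨ε, hε, fun u hu => ?_⟩
  have := (le_div_iff₀ ((norm_nonneg _).lt_of_ne' (hne u hu))).1 (hεK u hu)
  linarith

end NormalCone

section Curve

variable {F : Type*} [NormedAddCommGroup F] [InnerProductSpace ℝ F]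
  {f : ℝ → F} {f' : F} {s : Set ℝ} {x : ℝ}

lemma inv_norm_smul_sub_eq_neg_inv_norm_smul_slope {y : ℝ} (hy : y < x) :
    ‖f y - f x‖⁻¹ • (f y - f x) = -(‖slope f x y‖⁻¹ • slope f x y) := by
  have hc : y - x < 0 := sub_neg.2 hy
  rw [slope_def_module, norm_smul, smul_smul, ← neg_smul, norm_inv, Real.norm_eq_abs,
    abs_of_neg hc, mul_inv, inv_inv]
  congr 1
  field_simp [hc.ne]

lemma HasDerivWithinAt.tendsto_inv_norm_smul_sub_left (h : HasDerivWithinAt f f' s x)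
    (hf' : f' ≠ 0) :
    Tendsto (fun y => ‖f y - f x‖⁻¹ • (f y - f x)) (𝓝[s ∩ Iio x] x) (𝓝 (-(‖f'‖⁻¹ • f'))) := by
  have hslope : Tendsto (slope f x) (𝓝[s ∩ Iio x] x) (𝓝 f') :=
    (hasDerivWithinAt_iff_tendsto_slope.1 h).mono_left
      (nhdsWithin_mono x fun y hy => ⟨hy.1, hy.2.ne⟩)
  have hunit : ContinuousAt (fun u : F => -(‖u‖⁻¹ • u)) f' :=
    ((continuous_norm.continuousAt.inv₀ (norm_ne_zero_iff.2 hf')).smul continuousAt_id).neg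
  refine (hunit.tendsto.comp hslope).congr' ?_
  filter_upwards [self_mem_nhdsWithin] with y hy
  exact (inv_norm_smul_sub_eq_neg_inv_norm_smul_slope hy.2).symm

lemma HasDerivWithinAt.eventually_mul_norm_sub_le_inner_inv_norm_smul
    (h : HasDerivWithinAt f f' s x) (hf' : f' ≠ 0) {c : ℝ} (hc : c < 1) :
    ∀ᶠ y in 𝓝[s ∩ Ioi x] x, c * ‖f y - f x‖ ≤ ⟪‖f'‖⁻¹ • f', f y - f x⟫ := by
  set u := ‖f'‖⁻¹ • f'
  have hslope : Tendsto (slope f x) (𝓝[s ∩ Ioi x] x) (𝓝 f') :=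
    (hasDerivWithinAt_iff_tendsto_slope.1 h).mono_left
      (nhdsWithin_mono x fun y hy => ⟨hy.1, hy.2.ne'⟩)
  have hlim : Tendsto (fun y => ⟪u, slope f x y⟫ - c * ‖slope f x y‖) (𝓝[s ∩ Ioi x] x)
      (𝓝 (⟪u, f'⟫ - c * ‖f'‖)) :=
    (tendsto_const_nhds.inner hslope).sub (tendsto_const_nhds.mul hslope.norm)
  have hpos : 0 < ⟪u, f'⟫ - c * ‖f'‖ := by
    have hf'_pos := norm_pos_iff.2 hf'
    rw [real_inner_smul_left, real_inner_self_eq_norm_mul_norm, inv_mul_cancel_left₀ hf'_pos.ne']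
    nlinarith
  filter_upwards [hlim.eventually_const_lt hpos, self_mem_nhdsWithin] with y hy hxy
  have hyx : 0 < y - x := sub_pos.2 hxy.2
  rw [slope_def_module, real_inner_smul_right, norm_smul, Real.norm_of_nonneg (inv_pos.2 hyx).le,
    ← mul_assoc, mul_comm c, mul_assoc, ← mul_sub] at hy
  nlinarith [(mul_pos_iff_of_pos_left (inv_pos.2 hyx)).1 hy]

end Curve

lemma secMinus_subset_of_hasDerivWithinAt {n : ℕ} {I : Set ℝ} {γ : ℝ → EuclideanSpace ℝ (Fin n)}
    {τ : ℝ} {v : EuclideanSpace ℝ (Fin n)} (h : HasDerivWithinAt γ v I τ) (hv : v ≠ 0) :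
    secMinus I γ τ ⊆ {-(‖v‖⁻¹ • v)} := by
  rintro q ⟨-, t, htI, htlt, ht, hq⟩
  have ht' : Tendsto t atTop (𝓝[I ∩ Iio τ] τ) :=
    tendsto_nhdsWithin_iff.2 ⟨ht, .of_forall fun k => ⟨htI k, htlt k⟩⟩
  exact tendsto_nhds_unique hq ((h.tendsto_inv_norm_smul_sub_left hv).comp ht')

namespace IsGeneralizedOrbit

variable {n : ℕ} {C : ℝ → Set (EuclideanSpace ℝ (Fin n))} {I : Set ℝ}
  {γ : ℝ → EuclideanSpace ℝ (Fin n)} {r : ℝ → ℝ}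

lemma mem_level (hC : IsConvexFoliation C) (hγ : IsGeneralizedOrbit C I γ r) {t : ℝ}
    (ht : t ∈ I) : γ t ∈ C (r t) :=
  (hC.1 _ (hγ.2.2.1 t ht).1).2.1.isClosed.frontier_subset (hγ.2.2.1 t ht).2

lemma mem_interior_level_of_lt (hC : IsConvexFoliation C) (hγ : IsGeneralizedOrbit C I γ r)
    {t₁ t₂ : ℝ} (h₁ : t₁ ∈ I) (h₂ : t₂ ∈ I) (h : t₁ < t₂) : γ t₂ ∈ interior (C (r t₁)) :=
  hC.2.1 _ _ (hγ.2.2.1 t₂ h₂).1 (hγ.2.2.2.1 t₁ h₁ t₂ h₂ h) (hγ.mem_level hC h₂)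

lemma mem_level_of_le (hC : IsConvexFoliation C) (hγ : IsGeneralizedOrbit C I γ r)
    {t₁ t₂ : ℝ} (h₁ : t₁ ∈ I) (h₂ : t₂ ∈ I) (h : t₁ ≤ t₂) : γ t₂ ∈ C (r t₁) := by
  rcases h.eq_or_lt with rfl | hlt
  · exact hγ.mem_level hC h₂
  · exact interior_subset (hγ.mem_interior_level_of_lt hC h₁ h₂ hlt)

lemma injOn (hC : IsConvexFoliation C) (hγ : IsGeneralizedOrbit C I γ r) : InjOn γ I := by
  have key : ∀ a ∈ I, ∀ b ∈ I, a < b → γ a ≠ γ b := fun a ha b hb hab heq =>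
    (hγ.2.2.1 a ha).2.2 (heq ▸ hγ.mem_interior_level_of_lt hC ha hb hab)
  intro a ha b hb heq
  by_contra hne
  rcases lt_or_gt_of_ne hne with hab | hba
  · exact key a ha b hb hab heq
  · exact key b hb a ha hba heq.symm

lemma exists_pos_forall_inner_le (hC : IsConvexFoliation C) (hγ : IsGeneralizedOrbit C I γ r)
    (hI : I.OrdConnected) {τ : ℝ} (hτ : τ ∈ I) {v : EuclideanSpace ℝ (Fin n)}
    (hderiv : HasDerivWithinAt γ v I τ) (hv : v ≠ 0)
    (hq : -(‖v‖⁻¹ • v) ∈ normalCone (C (r τ)) (γ τ)) :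
    ∃ ε > 0, ∀ s ∈ I ∩ Ici τ, ⟪-(‖v‖⁻¹ • v), γ s - γ τ⟫ ≤ -ε * ‖γ s - γ τ‖ := by
  by_cases htail : ∃ s₀ ∈ I, τ < s₀
  swap
  · simp only [not_exists, not_and, not_lt] at htail
    refine ⟨1, one_pos, fun s ⟨hs, hτs⟩ => ?_⟩
    simp [le_antisymm (htail s hs) hτs]
  obtain ⟨s₀, hs₀, hτs₀⟩ := htail
  obtain ⟨δ, hδ, hnear⟩ := Metric.nhdsWithin_basis_ball.eventually_iff.1
    (hderiv.eventually_mul_norm_sub_le_inner_inv_norm_smul hv one_half_lt_one)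
  set s₁ := min s₀ (τ + δ / 2)
  have hτs₁ : τ < s₁ := lt_min hτs₀ (by linarith)
  have hs₁ : s₁ ∈ I := hI.out hτ hs₀ ⟨hτs₁.le, min_le_left _ _⟩
  have hr₁ := (hγ.2.2.1 s₁ hs₁).1
  obtain ⟨ε, hε, hfar⟩ := exists_pos_forall_inner_le_of_subset_interior (hC.1 _ hr₁).2.1
    (hC.2.1 _ _ hr₁ (hγ.2.2.2.1 τ hτ s₁ hs₁ hτs₁)) hq (neg_ne_zero.2 (smul_ne_zero
      (inv_ne_zero (norm_ne_zero_iff.2 hv)) hv))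
  refine ⟨min (1 / 2) ε, lt_min one_half_pos hε, fun s ⟨hs, hτs⟩ => ?_⟩
  have hd := norm_nonneg (γ s - γ τ)
  rcases lt_or_ge s s₁ with hss₁ | hs₁s
  · rcases (mem_Ici.1 hτs).eq_or_lt with rfl | hτs
    · simp
    have hball : s ∈ ball τ δ := by
      rw [mem_ball, Real.dist_eq, abs_of_pos (sub_pos.2 hτs)]
      linarith [min_le_right s₀ (τ + δ / 2)]
    have := hnear ⟨hball, hs, hτs⟩
    rw [inner_neg_left]
    nlinarith [min_le_left (1 / 2 : ℝ) ε]
  · have := hfar _ (hγ.mem_level_of_le hC hs₁ hs hs₁s)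
    nlinarith [min_le_right (1 / 2 : ℝ) ε]

end IsGeneralizedOrbit

theorem c1_generalizedOrbit_stronglySelfContracted_general {n : ℕ}
    (C : ℝ → Set (EuclideanSpace ℝ (Fin n))) (hC : IsConvexFoliation C)
    (T : ENNReal) (I : Set ℝ)
    (hI : I = {t : ℝ | 0 ≤ t ∧ ENNReal.ofReal t < T})
    (γ : ℝ → EuclideanSpace ℝ (Fin n)) (r : ℝ → ℝ)
    (hγ : IsGeneralizedOrbit C I γ r)
    (γ' : ℝ → EuclideanSpace ℝ (Fin n))
    (hderiv : ∀ t ∈ I, HasDerivWithinAt γ (γ' t) I t)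
    (hne : ∀ t ∈ I, γ' t ≠ 0) :
    StronglySelfContracted I γ := by
  have hI_conn : I.OrdConnected := by
    subst hI
    exact ⟨fun a ha b hb x hx => ⟨ha.1.trans hx.1, (ENNReal.ofReal_le_ofReal hx.2).trans_lt hb.2⟩⟩
  refine ⟨hγ.1, hγ.injOn hC, fun τ hτ q hq => ?_⟩
  have hq_eq : q = -(‖γ' τ‖⁻¹ • γ' τ) :=
    secMinus_subset_of_hasDerivWithinAt (hderiv τ hτ) (hne τ hτ) hq
  obtain ⟨ε, hε, hcone⟩ := hγ.exists_pos_forall_inner_le hC hI_conn hτ (hderiv τ hτ) (hne τ hτ)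
    (hq_eq ▸ hγ.2.2.2.2 τ hτ hq)
  rw [normalCone_convexHull, hq_eq]
  exact mem_interior_normalCone_of_forall_inner_le hε (forall_mem_image.2 hcone)

/-- Every `C¹` generalized orbit of a convex foliation with nowhere-vanishing derivative
is strongly self-contracted. -/
theorem c1_generalizedOrbit_stronglySelfContracted {n : ℕ}
    (C : ℝ → Set (EuclideanSpace ℝ (Fin n))) (hC : IsConvexFoliation C)
    (T : ENNReal) (hT : 0 < T) (I : Set ℝ)
    (hI : I = {t : ℝ | 0 ≤ t ∧ ENNReal.ofReal t < T})
    (γ : ℝ → EuclideanSpace ℝ (Fin n)) (r : ℝ → ℝ)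
    (hγ : IsGeneralizedOrbit C I γ r)
    (γ' : ℝ → EuclideanSpace ℝ (Fin n))
    (hderiv : ∀ t ∈ I, HasDerivWithinAt γ (γ' t) I t)
    (hC1 : ContinuousOn γ' I)
    (hne : ∀ t ∈ I, γ' t ≠ 0) :
    StronglySelfContracted I γ :=
  c1_generalizedOrbit_stronglySelfContracted_general C hC T I hI γ r hγ γ' hderiv hne
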